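/- Let X be a real normed space, let Ψ̂ : X → (−∞,∞] be lower semicontinuous, convex, with values in [0,∞] and Ψ̂(0) = 0, and let Φ̂ : X → ℝ be of class C¹. For u ∈ X the following are equivalent: (i) u is a critical point of Ψ̂ − Φ̂, i.e. Ψ̂(v) − Ψ̂(u) − Φ̂'(u)(v − u) ≥ 0 for all v ∈ X; (ii) for every convex functional T ∈ C¹(X,ℝ), u is a critical point of (Ψ̂ + T) − (Φ̂ + T), i.e. (Ψ̂ + T)(v) − (Ψ̂ + T)(u) − (Φ̂'(u) + T'(u))(v − u) ≥ 0 for all v ∈ X; (iii) there exists some convex functional T ∈ C¹(X,ℝ) for which u is a critical point of (Ψ̂ + T) − (Φ̂ + T). -/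

import Mathlib

/-! For convex differentiable `T` the gradient inequality `T u + T'(u)(v - u) ≤ T v` holds,
so adding it to the critical point inequality of `Ψ - Φ` gives that of `(Ψ + T) - (Φ + T)`.
Conversely, test the critical point inequality of `(Ψ + T) - (Φ + T)` at `u + t • (v - u)` and
bound `Ψ` there by convexity: after dividing by `t` and letting `t → 0⁺`, the difference quotient
of `T` tends to `T'(u)(v - u)`, which cancels and leaves the inequality for `Ψ - Φ`. -/

open Set Filter Topology

noncomputable section

section

variable {X : Type*} [NormedAddCommGroup X] [NormedSpace ℝ X]

/-- `u` is a critical point of `f - Φ` for any `Φ` with `Φ'(u) = ℓ`. -/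
def IsCriticalPoint (f : X → EReal) (ℓ : X →L[ℝ] ℝ) (u : X) : Prop :=
  ∀ v, 0 ≤ f v - f u - ((ℓ (v - u) : ℝ) : EReal)

theorem EReal.zero_le_sub_coe_sub_coe_iff (x : EReal) (r c : ℝ) :
    0 ≤ x - r - c ↔ ((r + c : ℝ) : EReal) ≤ x := by
  induction x using EReal.rec
  · simp
  · norm_cast
    constructor <;> intro <;> linarith
  · simp

theorem isCriticalPoint_iff {f : X → EReal} {ℓ : X →L[ℝ] ℝ} {u : X} :
    IsCriticalPoint f ℓ u ↔
      ∃ r : ℝ, f u = r ∧ ∀ v, ((r + ℓ (v - u) : ℝ) : EReal) ≤ f v := by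
  constructor
  · intro h
    -- at `v = u` this reads `0 ≤ f u - f u`, false for `f u = ±⊤` as `⊤ - ⊤ = ⊥` in `EReal`
    obtain ⟨r, hr⟩ : ∃ r : ℝ, f u = r := by
      have hu : 0 ≤ f u - f u := by simpa using h u
      revert hu
      induction f u using EReal.rec <;> simp
    refine ⟨r, hr, fun v => ?_⟩
    rw [← EReal.zero_le_sub_coe_sub_coe_iff, ← hr]
    exact h v
  · rintro ⟨r, hr, h⟩ v
    rw [hr, EReal.zero_le_sub_coe_sub_coe_iff]
    exact h v

theorem IsLocalMinOn.hasDerivWithinAt_Ioi_nonneg {g : ℝ → ℝ} {g' a : ℝ}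
    (hmin : IsLocalMinOn g (Ioi a) a) (hg : HasDerivWithinAt g g' (Ioi a) a) : 0 ≤ g' := by
  have h1 : (1 : ℝ) ∈ posTangentConeAt (Ioi a) a :=
    one_mem_posTangentConeAt_iff_frequently.2 eventually_mem_nhdsWithin.frequently
  simpa using hmin.hasFDerivWithinAt_nonneg hg h1

theorem DifferentiableAt.hasDerivAt_comp_lineMap {T : X → ℝ} {u : X}
    (hd : DifferentiableAt ℝ T u) (v : X) :
    HasDerivAt (T ∘ AffineMap.lineMap (k := ℝ) u v) (fderiv ℝ T u (v - u)) 0 := by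
  refine HasFDerivAt.comp_hasDerivAt (0 : ℝ) ?_ AffineMap.hasDerivAt_lineMap
  simpa using hd.hasFDerivAt

theorem ConvexOn.fderiv_apply_sub_le {s : Set X} {T : X → ℝ} (hT : ConvexOn ℝ s T) {u v : X}
    (hu : u ∈ s) (hv : v ∈ s) (hd : DifferentiableAt ℝ T u) :
    fderiv ℝ T u (v - u) ≤ T v - T u := by
  have hline : ConvexOn ℝ (AffineMap.lineMap (k := ℝ) u v ⁻¹' s)
      (T ∘ AffineMap.lineMap (k := ℝ) u v) :=
    hT.comp_affineMap _
  simpa [slope] using hline.le_slope_of_hasDerivAt (x := 0) (y := 1) (by simpa) (by simpa)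
    one_pos (hd.hasDerivAt_comp_lineMap v)

theorem IsCriticalPoint.add_convexOn {Ψ : X → EReal} {ℓ : X →L[ℝ] ℝ} {u : X} {T : X → ℝ}
    (h : IsCriticalPoint Ψ ℓ u) (hT : ConvexOn ℝ univ T) (hd : DifferentiableAt ℝ T u) :
    IsCriticalPoint (fun v => Ψ v + T v) (ℓ + fderiv ℝ T u) u := by
  obtain ⟨r, hr, hΨ⟩ := isCriticalPoint_iff.1 h
  refine isCriticalPoint_iff.2 ⟨r + T u, by simp [hr], fun v => ?_⟩
  have hT_le := hT.fderiv_apply_sub_le (mem_univ u) (mem_univ v) hd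
  calc (((r + T u) + (ℓ + fderiv ℝ T u) (v - u) : ℝ) : EReal)
      ≤ ((r + ℓ (v - u) : ℝ) : EReal) + T v := by
        norm_cast
        rw [add_apply]
        linarith
    _ ≤ Ψ v + T v := by gcongr; exact hΨ v

theorem apply_lineMap_le_of_convex {Ψ : X → EReal}
    (hΨ : ∀ u v : X, ∀ a b : ℝ, 0 ≤ a → 0 ≤ b → a + b = 1 →
      Ψ (a • u + b • v) ≤ (a : EReal) * Ψ u + (b : EReal) * Ψ v)
    {u v : X} {r s t : ℝ} (hu : Ψ u = r) (hv : Ψ v = s) (ht₀ : 0 ≤ t) (ht₁ : t ≤ 1) :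
    Ψ (AffineMap.lineMap u v t) ≤ (((1 - t) * r + t * s : ℝ) : EReal) := by
  have h := hΨ u v (1 - t) t (by linarith) ht₀ (by ring)
  rw [← AffineMap.lineMap_apply_module, hu, hv] at h
  exact_mod_cast h

theorem IsCriticalPoint.of_add {Ψ : X → EReal} {ℓ : X →L[ℝ] ℝ} {u : X} {T : X → ℝ}
    (hΨ : ∀ u v : X, ∀ a b : ℝ, 0 ≤ a → 0 ≤ b → a + b = 1 →
      Ψ (a • u + b • v) ≤ (a : EReal) * Ψ u + (b : EReal) * Ψ v)
    (hd : DifferentiableAt ℝ T u)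
    (h : IsCriticalPoint (fun v => Ψ v + T v) (ℓ + fderiv ℝ T u) u) :
    IsCriticalPoint Ψ ℓ u := by
  obtain ⟨r', hsum, hle⟩ := isCriticalPoint_iff.1 h
  obtain ⟨r, hr⟩ : ∃ r : ℝ, Ψ u = r := by
    revert hsum
    induction Ψ u using EReal.rec <;> simp
  refine isCriticalPoint_iff.2 ⟨r, hr, fun v => ?_⟩
  have hr' : r' = r + T u := by
    rw [hr] at hsum
    exact_mod_cast hsum.symm
  cases hv : Ψ v using EReal.rec with
  | bot =>
    have hbot := hle v
    rw [hv, EReal.bot_add, le_bot_iff] at hbot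
    exact absurd hbot (EReal.coe_ne_bot _)
  | top => exact le_top
  | coe s =>
    set c := ℓ (v - u)
    set d := fderiv ℝ T u (v - u)
    -- `g t ≥ g 0` is the critical point inequality at `lineMap u v t` with `Ψ` bounded by convexity
    let g : ℝ → ℝ := fun t => T (AffineMap.lineMap u v t) + t * (s - r - c - d)
    have hmin : IsLocalMinOn g (Ioi 0) 0 := by
      filter_upwards [Ioo_mem_nhdsGT one_pos] with t ht
      set w := AffineMap.lineMap (k := ℝ) u v t
      have hΨw := apply_lineMap_le_of_convex hΨ hr hv ht.1.le ht.2.le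
      have hw : w - u = t • (v - u) := AffineMap.lineMap_vsub_left u v t
      have hcrit := (hle w).trans (add_le_add_left hΨw (T w : EReal))
      rw [hw, map_smul, smul_eq_mul] at hcrit
      norm_cast at hcrit
      simp only [g, hr', add_apply, AffineMap.lineMap_apply_zero] at hcrit ⊢
      linarith
    have hderiv : HasDerivWithinAt g (d + 1 * (s - r - c - d)) (Ioi 0) 0 :=
      ((hd.hasDerivAt_comp_lineMap v).add ((hasDerivAt_id 0).mul_const _)).hasDerivWithinAt
    have hslope := hmin.hasDerivWithinAt_Ioi_nonneg hderiv
    exact_mod_cast (by linarith : r + c ≤ s)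

end

theorem critical_point_invariant_under_adding_convex_C1_general
    {X : Type*} [NormedAddCommGroup X] [NormedSpace ℝ X]
    (Ψ : X → EReal) (Φ : X → ℝ)
    -- Ψ̂ lower semicontinuous, convex, with values in [0,∞], Ψ̂(0) = 0
    (hΨconv : ∀ u v : X, ∀ a b : ℝ, 0 ≤ a → 0 ≤ b → a + b = 1 →
      Ψ (a • u + b • v) ≤ (a : EReal) * Ψ u + (b : EReal) * Ψ v)
    (u : X) :
    -- (i) ↔ (ii)
    ((∀ v : X, 0 ≤ Ψ v - Ψ u - ((fderiv ℝ Φ u (v - u) : ℝ) : EReal)) ↔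
      (∀ T : X → ℝ, ConvexOn ℝ univ T → ContDiff ℝ 1 T →
        ∀ v : X, 0 ≤ (Ψ v + ((T v : ℝ) : EReal)) - (Ψ u + ((T u : ℝ) : EReal)) -
          (((fderiv ℝ Φ u + fderiv ℝ T u) (v - u) : ℝ) : EReal))) ∧
    -- (i) ↔ (iii)
    ((∀ v : X, 0 ≤ Ψ v - Ψ u - ((fderiv ℝ Φ u (v - u) : ℝ) : EReal)) ↔
      (∃ T : X → ℝ, ConvexOn ℝ univ T ∧ ContDiff ℝ 1 T ∧
        ∀ v : X, 0 ≤ (Ψ v + ((T v : ℝ) : EReal)) - (Ψ u + ((T u : ℝ) : EReal)) -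
          (((fderiv ℝ Φ u + fderiv ℝ T u) (v - u) : ℝ) : EReal))) := by
  have add (T : X → ℝ) (hc : ConvexOn ℝ univ T) (hT : ContDiff ℝ 1 T)
      (h : IsCriticalPoint Ψ (fderiv ℝ Φ u) u) :
      IsCriticalPoint (fun v => Ψ v + T v) (fderiv ℝ Φ u + fderiv ℝ T u) u :=
    h.add_convexOn hc (hT.differentiable one_ne_zero u)
  have cancel (T : X → ℝ) (hT : ContDiff ℝ 1 T)
      (h : IsCriticalPoint (fun v => Ψ v + T v) (fderiv ℝ Φ u + fderiv ℝ T u) u) :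
      IsCriticalPoint Ψ (fderiv ℝ Φ u) u :=
    h.of_add hΨconv (hT.differentiable one_ne_zero u)
  have hc0 : ConvexOn ℝ univ (0 : X → ℝ) := convexOn_const 0 convex_univ
  exact ⟨⟨fun h T hc hT => add T hc hT h,
      fun h => cancel 0 contDiff_const (h 0 hc0 contDiff_const)⟩,
    ⟨fun h => ⟨0, hc0, contDiff_const, add 0 hc0 contDiff_const h⟩,
      fun ⟨T, _, hT, h⟩ => cancel T hT h⟩⟩

theorem critical_point_invariant_under_adding_convex_C1
    {X : Type*} [NormedAddCommGroup X] [NormedSpace ℝ X]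
    (Ψ : X → EReal) (Φ : X → ℝ)
    -- Ψ̂ lower semicontinuous, convex, with values in [0,∞], Ψ̂(0) = 0
    (hΨ0 : Ψ 0 = 0)
    (hΨnn : ∀ u : X, 0 ≤ Ψ u)
    (hΨlsc : LowerSemicontinuous Ψ)
    (hΨconv : ∀ u v : X, ∀ a b : ℝ, 0 ≤ a → 0 ≤ b → a + b = 1 →
      Ψ (a • u + b • v) ≤ (a : EReal) * Ψ u + (b : EReal) * Ψ v)
    -- Φ̂ of class C¹
    (hΦ : ContDiff ℝ 1 Φ)
    (u : X) :
    -- (i) ↔ (ii)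
    ((∀ v : X, 0 ≤ Ψ v - Ψ u - ((fderiv ℝ Φ u (v - u) : ℝ) : EReal)) ↔
      (∀ T : X → ℝ, ConvexOn ℝ univ T → ContDiff ℝ 1 T →
        ∀ v : X, 0 ≤ (Ψ v + ((T v : ℝ) : EReal)) - (Ψ u + ((T u : ℝ) : EReal)) -
          (((fderiv ℝ Φ u + fderiv ℝ T u) (v - u) : ℝ) : EReal))) ∧
    -- (i) ↔ (iii)
    ((∀ v : X, 0 ≤ Ψ v - Ψ u - ((fderiv ℝ Φ u (v - u) : ℝ) : EReal)) ↔
      (∃ T : X → ℝ, ConvexOn ℝ univ T ∧ ContDiff ℝ 1 T ∧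
        ∀ v : X, 0 ≤ (Ψ v + ((T v : ℝ) : EReal)) - (Ψ u + ((T u : ℝ) : EReal)) -
          (((fderiv ℝ Φ u + fderiv ℝ T u) (v - u) : ℝ) : EReal))) :=
  critical_point_invariant_under_adding_convex_C1_general Ψ Φ hΨconv u

end
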